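/- Let f = (f_1, ..., f_n) be a system of n algebraic functions on ℂ^n embedded into the systems E_i, fix generic parameters for the embedding, and for 1 ≤ i ≤ n consider the parametrized homotopy H_{η,i}(x, z_1, ..., z_i, t) whose equations are f_k(x) + Σ_{j=1}^{i-1} λ_{k,j} z_j + t η λ_{k,i} z_i = 0 (k = 1, ..., n), L_j(x) + z_j = 0 (j = 1, ..., i−1), and t η L_i(x) + z_i = 0. Then for all but finitely many complex numbers η with |η| = 1, the equations H_{η,i} = 0 define an algebraic set that is flat over a Zariski open subset of ℂ containing the interval (0, 1]. -/

import Mathlib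

set_option synthInstance.maxHeartbeats 1000000
set_option maxHeartbeats 1000000

open Filter Topology

/-- The common zero set in `ℂ^σ` of a set of polynomials. -/
def zlocus {σ : Type*} (S : Set (MvPolynomial σ ℂ)) : Set (σ → ℂ) :=
  {x | ∀ p ∈ S, MvPolynomial.eval x p = 0}

/-- An (affine) algebraic subset of `ℂ^σ`. -/
def IsAlgSet {σ : Type*} (V : Set (σ → ℂ)) : Prop := ∃ S, V = zlocus S

/-- A Zariski open subset of a complex affine space: the complement of an
algebraic subset. -/
def IsZariskiOpen {σ : Type*} (U : Set (σ → ℂ)) : Prop := IsAlgSet Uᶜ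

/-- A subset `U` of `ℂ^σ` that is generic for the underlying real algebraic
structure: its complement is contained in the real zero set of a nonzero real
polynomial in the real and imaginary parts of the coordinates.  (Such a set is
dense, and Zariski open data of this kind is what a random choice of parameters
achieves with probability one.) -/
def RZariskiGeneric {σ : Type*} (U : Set (σ → ℂ)) : Prop :=
  ∃ P : MvPolynomial (σ ⊕ σ) ℝ, P ≠ 0 ∧
    ∀ y : σ → ℂ, y ∉ U →
      MvPolynomial.eval (Sum.elim (fun s => (y s).re) (fun s => (y s).im)) P = 0

/-- A point `p` is an isolated point of the set `S`. -/
def IsIsolatedIn {α : Type*} [TopologicalSpace α] (S : Set α) (p : α) : Prop :=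
  p ∈ S ∧ ∃ U : Set α, IsOpen U ∧ p ∈ U ∧ S ∩ U = {p}

/-- The index type of the parameter space `ℂ^{n×(n+1)} × ℂ^{n×n}` for the embedding
of a system on `ℂ^n`: coefficients of the affine-linear slicing functions `L_j` and
multipliers `λ_{k,j}`. -/
abbrev CParam (n : ℕ) := (Fin n × Fin (n + 1)) ⊕ (Fin n × Fin n)

/-- The `j`-th affine-linear slicing function `L_j(x) = a_j + a_{j,1}x_1 + ⋯ + a_{j,n}x_n`. -/
noncomputable def LvalC {n : ℕ} (y : CParam n → ℂ) (j : Fin n) (x : Fin n → ℂ) : ℂ :=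
  y (Sum.inl (j, 0)) + ∑ t : Fin n, y (Sum.inl (j, t.succ)) * x t

/-- The multiplier `λ_{k,j}` from the parameter vector. -/
def lamC {n : ℕ} (y : CParam n → ℂ) (k j : Fin n) : ℂ := y (Sum.inr (k, j))

/-- The embedded system `E_i(f)` on `ℂ^n`: the map whose vanishing expresses
`f_k(x) + Σ_{j=1}^{i} λ_{k,j} z_j = 0` (k = 1, …, n) together with the slicing
equations `L_j(x) + z_j = 0` (j = 1, …, i). -/
noncomputable def EmapC {n : ℕ} (f : Fin n → MvPolynomial (Fin n) ℂ)
    (i : ℕ) (hin : i ≤ n) (y : CParam n → ℂ)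
    (p : (Fin n → ℂ) × (Fin i → ℂ)) : (Fin n → ℂ) × (Fin i → ℂ) :=
  (fun k => MvPolynomial.eval p.1 (f k) +
      ∑ j : Fin i, lamC y k (j.castLE hin) * p.2 j,
   fun j => LvalC y (j.castLE hin) p.1 + p.2 j)

/-- The solution set of `E_i(f) = 0` in `ℂ^n × ℂ^i`. -/
noncomputable def ESolC {n : ℕ} (f : Fin n → MvPolynomial (Fin n) ℂ)
    (i : ℕ) (hin : i ≤ n) (y : CParam n → ℂ) :
    Set ((Fin n → ℂ) × (Fin i → ℂ)) :=
  {p | EmapC f i hin y p = 0}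

/-- The index of `z_i`, the last slack variable of `E_i`. -/
def lastIdx (i : ℕ) (hi1 : 1 ≤ i) : Fin i := ⟨i - 1, by omega⟩

/-- The Jacobian matrix of the embedded system `E_i(f)` at a point. -/
noncomputable def EJacC {n : ℕ} (f : Fin n → MvPolynomial (Fin n) ℂ)
    (i : ℕ) (hin : i ≤ n) (y : CParam n → ℂ)
    (p : (Fin n → ℂ) × (Fin i → ℂ)) : Matrix (Fin n ⊕ Fin i) (Fin n ⊕ Fin i) ℂ :=
  Matrix.of fun r c =>
    match r, c with
    | Sum.inl k, Sum.inl t => MvPolynomial.eval p.1 (MvPolynomial.pderiv t (f k))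
    | Sum.inl k, Sum.inr j => lamC y k (j.castLE hin)
    | Sum.inr j, Sum.inl t => y (Sum.inl (j.castLE hin, t.succ))
    | Sum.inr j, Sum.inr j' => if j = j' then 1 else 0

/-- The homotopy `H_i(x, z, t) = t·E_i + (1−t)·(E_{i-1}, z_i)`: the `k`-th equation
is `f_k(x) + Σ_{j<i} λ_{k,j} z_j + t λ_{k,i} z_i = 0`, the next `i−1` equations are
`L_j(x) + z_j = 0`, and the last one is `t L_i(x) + z_i = 0`. -/
noncomputable def HmapC {n : ℕ} (f : Fin n → MvPolynomial (Fin n) ℂ)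
    (i : ℕ) (hin : i ≤ n) (y : CParam n → ℂ) (t : ℝ)
    (p : (Fin n → ℂ) × (Fin i → ℂ)) : (Fin n → ℂ) × (Fin i → ℂ) :=
  (fun k => MvPolynomial.eval p.1 (f k) +
      ∑ j : Fin i, (if (j : ℕ) = i - 1 then (t : ℂ) else 1) *
        lamC y k (j.castLE hin) * p.2 j,
   fun j => (if (j : ℕ) = i - 1 then (t : ℂ) else 1) * LvalC y (j.castLE hin) p.1 + p.2 j)

/-- `X_i`, for `0 ≤ i ≤ n-1`: the set of points `x ∈ ℂ^n` such that `(x, z)` is the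
limit, as `t → 0⁺` and with `z_i = 0`, of a solution path of the homotopy
`H_{i+1}(x, z_1, …, z_{i+1}, t)` starting (at `t = 1`) at a solution of
`E_{i+1} = 0` with `z_{i+1} ≠ 0` (a point of `Z_{i+1}`).  The condition `z_i = 0`
is vacuous for `i = 0`. -/
noncomputable def XSet {n : ℕ} (f : Fin n → MvPolynomial (Fin n) ℂ)
    (y : CParam n → ℂ) (i : ℕ) (hin : i + 1 ≤ n) : Set (Fin n → ℂ) :=
  {x | ∃ (z : Fin (i + 1) → ℂ) (γ : ℝ → (Fin n → ℂ) × (Fin (i + 1) → ℂ)),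
    ContinuousOn γ (Set.Ioc 0 1) ∧
    (∀ t ∈ Set.Ioc (0 : ℝ) 1, HmapC f (i + 1) hin y t (γ t) = 0) ∧
    γ 1 ∈ ESolC f (i + 1) hin y ∧
    (γ 1).2 (lastIdx (i + 1) (by omega)) ≠ 0 ∧
    Tendsto γ (𝓝[>] (0 : ℝ)) (𝓝 (x, z)) ∧
    (∀ _ : 1 ≤ i, z ⟨i - 1, by omega⟩ = 0)}

/-- The common zero set of the system `f` in `ℂ^n`. -/
def zeroSetOf {n : ℕ} (f : Fin n → MvPolynomial (Fin n) ℂ) : Set (Fin n → ℂ) :=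
  {x | ∀ k, MvPolynomial.eval x (f k) = 0}

/-- The dimension of an algebraic subset of `ℂ^σ`: the Krull dimension of its
coordinate ring. -/
noncomputable def algSetDim {σ : Type*} (V : Set (σ → ℂ)) : WithBot (WithTop ℕ) :=
  ringKrullDim (MvPolynomial σ ℂ ⧸ MvPolynomial.vanishingIdeal ℂ V)


/-- The variables `(x_1, …, x_n, z_1, …, z_i, t)` of the homotopy `H_{η,i}`. -/
abbrev HVar (n i : ℕ) := (Fin n ⊕ Fin i) ⊕ Unit

/-- The polynomial equations of the homotopy `H_{η,i}(x, z_1, …, z_i, t)`: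
`f_k(x) + Σ_{j=1}^{i-1} λ_{k,j} z_j + t η λ_{k,i} z_i = 0` (k = 1, …, n),
`L_j(x) + z_j = 0` (j = 1, …, i−1), and `t η L_i(x) + z_i = 0`, as polynomials in
the `n + i + 1` variables `(x, z, t)`. -/
noncomputable def HPolys {n : ℕ} (f : Fin n → MvPolynomial (Fin n) ℂ)
    (i : ℕ) (hin : i ≤ n) (y : CParam n → ℂ) (η : ℂ) :
    (Fin n ⊕ Fin i) → MvPolynomial (HVar n i) ℂ :=
  fun r => match r with
    | Sum.inl k =>
        MvPolynomial.rename (fun t => Sum.inl (Sum.inl t)) (f k) +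
        ∑ j : Fin i,
          (if (j : ℕ) = i - 1 then
              MvPolynomial.C η * MvPolynomial.X (Sum.inr ()) else 1) *
            MvPolynomial.C (lamC y k (j.castLE hin)) *
            MvPolynomial.X (Sum.inl (Sum.inr j))
    | Sum.inr j =>
        (if (j : ℕ) = i - 1 then
            MvPolynomial.C η * MvPolynomial.X (Sum.inr ()) else 1) *
          (MvPolynomial.C (y (Sum.inl (j.castLE hin, 0))) +
            ∑ t : Fin n, MvPolynomial.C (y (Sum.inl (j.castLE hin, t.succ))) *
              MvPolynomial.X (Sum.inl (Sum.inl t))) +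
        MvPolynomial.X (Sum.inl (Sum.inr j))

/-- The coordinate ring of the total space of `H_{η,i}` is an algebra over the
coordinate ring `ℂ[t]` of the `t`-line, via `t ↦` the last variable. -/
noncomputable instance tAlgebra (n i : ℕ) :
    Algebra (Polynomial ℂ) (MvPolynomial (HVar n i) ℂ) :=
  ((Polynomial.aeval
      (MvPolynomial.X (Sum.inr ()) : MvPolynomial (HVar n i) ℂ)).toRingHom).toAlgebra


/-! ### Auxiliary machinery -/

open TensorProduct in
theorem aux_flat_of_tf (R M : Type*) [CommRing R] [IsDomain R] [IsPrincipalIdealRing R]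
    [AddCommGroup M] [Module R M]
    (htf : ∀ (r : R) (m : M), r • m = 0 → r = 0 ∨ m = 0) : Module.Flat R M := by
  rw [Module.Flat.iff_lift_lsmul_comp_subtype_injective]
  intro I _
  obtain ⟨a, ha⟩ := (IsPrincipalIdealRing.principal I)
  by_cases h0 : a = 0
  · have : I = ⊥ := by simp [ha, h0, Ideal.span_zero, Submodule.span_eq_bot]
    subst this
    have : Subsingleton ((⊥ : Ideal R) ⊗[R] M) := by infer_instance
    intro x y _; exact Subsingleton.elim x y
  · have haI : a ∈ I := by rw [ha]; exact Ideal.subset_span rfl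
    set φ : M →ₗ[R] I ⊗[R] M := TensorProduct.mk R I M ⟨a, haI⟩ with hφ
    have hsurj : Function.Surjective φ := by
      intro x
      induction x using TensorProduct.induction_on with
      | zero => exact ⟨0, map_zero φ⟩
      | tmul b m =>
        have hb : (b : R) ∈ Ideal.span {a} := ha ▸ b.2
        obtain ⟨r, hr⟩ := Ideal.mem_span_singleton'.mp hb
        refine ⟨r • m, ?_⟩
        have hb2 : b = r • (⟨a, haI⟩ : I) :=
          Subtype.ext (by simp [Submodule.coe_smul, smul_eq_mul, hr])
        rw [hφ, TensorProduct.mk_apply, ← TensorProduct.smul_tmul, ← hb2]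
      | add x y hx hy =>
        obtain ⟨mx, hmx⟩ := hx; obtain ⟨my, hmy⟩ := hy
        exact ⟨mx + my, by rw [map_add, hmx, hmy]⟩
    intro x y hxy
    obtain ⟨mx, rfl⟩ := hsurj x
    obtain ⟨my, rfl⟩ := hsurj y
    have : a • mx = a • my := by
      simpa [hφ, TensorProduct.lift.tmul] using hxy
    have := htf a (mx - my) (by rw [smul_sub, this, sub_self])
    rcases this with h | h
    · exact absurd h h0
    · rw [sub_eq_zero] at h; rw [h]

theorem aux_loc_pid (R : Type*) [CommRing R] [IsPrincipalIdealRing R] (M : Submonoid R) :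
    IsPrincipalIdealRing (Localization M) := by
  constructor
  intro J
  obtain ⟨a, ha⟩ := IsPrincipalIdealRing.principal (J.comap (algebraMap R (Localization M)))
  refine ⟨⟨algebraMap R (Localization M) a, ?_⟩⟩
  conv_lhs => rw [← IsLocalization.map_comap M (Localization M) J]
  rw [Ideal.under_def, ha]
  simp [Ideal.map_span, Ideal.submodule_span_eq]

/-- The algebra endomorphism of the coordinate ring scaling the `t`-variable by `η`. -/
noncomputable def twist (n i : ℕ) (η : ℂ) :
    MvPolynomial (HVar n i) ℂ →ₐ[ℂ] MvPolynomial (HVar n i) ℂ :=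
  MvPolynomial.aeval (Sum.elim (fun v => MvPolynomial.X (Sum.inl v))
    (fun _ => MvPolynomial.C η * MvPolynomial.X (Sum.inr ())))

theorem twist_X_inl (n i : ℕ) (η : ℂ) (v : Fin n ⊕ Fin i) :
    twist n i η (MvPolynomial.X (Sum.inl v)) = MvPolynomial.X (Sum.inl v) := by
  simp [twist]

theorem twist_X_inr (n i : ℕ) (η : ℂ) :
    twist n i η (MvPolynomial.X (Sum.inr ())) =
      MvPolynomial.C η * MvPolynomial.X (Sum.inr ()) := by
  simp [twist]

theorem twist_twist (n i : ℕ) (η η' : ℂ) (p : MvPolynomial (HVar n i) ℂ) :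
    twist n i η (twist n i η' p) = twist n i (η * η') p := by
  have : (twist n i η).comp (twist n i η') = twist n i (η * η') := by
    apply MvPolynomial.algHom_ext
    rintro (v | v) <;>
      simp [twist, mul_assoc, mul_left_comm, MvPolynomial.algebraMap_eq]
  exact DFunLike.congr_fun this p

theorem twist_one (n i : ℕ) (p : MvPolynomial (HVar n i) ℂ) :
    twist n i 1 p = p := by
  have : twist n i 1 = AlgHom.id ℂ _ := by
    apply MvPolynomial.algHom_ext
    rintro (v | v) <;> simp [twist, MvPolynomial.algebraMap_eq]
  rw [this]; rfl

theorem twist_inv_twist (n i : ℕ) (η : ℂ) (hη : η ≠ 0) (p : MvPolynomial (HVar n i) ℂ) :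
    twist n i η⁻¹ (twist n i η p) = p := by
  rw [twist_twist, inv_mul_cancel₀ hη, twist_one]

theorem twist_rename (n i : ℕ) (η : ℂ) (p : MvPolynomial (Fin n) ℂ) :
    twist n i η (MvPolynomial.rename (fun t => Sum.inl (Sum.inl t)) p) =
      MvPolynomial.rename (fun t => Sum.inl (Sum.inl t)) p := by
  rw [twist, MvPolynomial.aeval_rename]
  have : (MvPolynomial.rename (R := ℂ) (fun t : Fin n => Sum.inl (Sum.inl t) :
      Fin n → HVar n i)) = MvPolynomial.aeval (fun t : Fin n =>
        (MvPolynomial.X (Sum.inl (Sum.inl t)) : MvPolynomial (HVar n i) ℂ)) := by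
    apply MvPolynomial.algHom_ext
    intro v; simp
  rw [this]
  rfl

/-- The twist carries `HPolys` at `η'` to `HPolys` at `η * η'`. -/
theorem twist_HPolys {n : ℕ} (f : Fin n → MvPolynomial (Fin n) ℂ)
    (i : ℕ) (hin : i ≤ n) (y : CParam n → ℂ) (η η' : ℂ) (r : Fin n ⊕ Fin i) :
    twist n i η (HPolys f i hin y η' r) = HPolys f i hin y (η * η') r := by
  have twist_C : ∀ c : ℂ, twist n i η (MvPolynomial.C c) = MvPolynomial.C c := by
    intro c; simp [twist, MvPolynomial.algebraMap_eq]
  rcases r with k | j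
  · simp only [HPolys, map_add, map_sum, map_mul, apply_ite (twist n i η), map_one,
      twist_C, twist_rename, twist_X_inl, twist_X_inr, MvPolynomial.C_mul]
    rw [add_right_inj]
    refine Finset.sum_congr rfl fun j _ => ?_
    split_ifs <;> ring
  · simp only [HPolys, map_add, map_sum, map_mul, apply_ite (twist n i η), map_one,
      twist_C, twist_rename, twist_X_inl, twist_X_inr, MvPolynomial.C_mul]
    rw [add_left_inj]
    split_ifs <;> ring

theorem twist_aeval (n i : ℕ) (η : ℂ) (p : Polynomial ℂ) :
    twist n i η (Polynomial.aeval (MvPolynomial.X (Sum.inr ()) :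
        MvPolynomial (HVar n i) ℂ) p) =
      Polynomial.aeval (MvPolynomial.X (Sum.inr ()) : MvPolynomial (HVar n i) ℂ)
        (p.comp (Polynomial.C η * Polynomial.X)) := by
  rw [Polynomial.aeval_comp]
  rw [← Polynomial.aeval_algHom_apply]
  congr 1
  simp [twist_X_inr, Algebra.smul_def]

/-- Let `f = (f_1, …, f_n)` be a system of `n` algebraic functions on `ℂ^n`
embedded into the systems `E_i`, fix generic parameters for the embedding (a
nonempty Zariski open set `U` of parameters), and for `1 ≤ i ≤ n` consider the
parametrized homotopy `H_{η,i}`.  Then for all but finitely many complex numbers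
`η` with `|η| = 1`, the equations `H_{η,i} = 0` define an algebraic set that is
flat over a Zariski open subset of `ℂ` containing the interval `(0, 1]` — namely
over the complement `D(h)` of the zero set of some nonzero polynomial `h ∈ ℂ[t]`
not vanishing on `(0, 1]`: the coordinate ring of the total space, localized at
the powers of `h`, is flat over `ℂ[t]` localized at the powers of `h`. -/
theorem homotopy_flat_over_zariski_open (n : ℕ) (hn : 0 < n)
    (f : Fin n → MvPolynomial (Fin n) ℂ) :
    ∃ U : Set (CParam n → ℂ), IsZariskiOpen U ∧ U.Nonempty ∧
      ∀ y ∈ U, ∀ (i : ℕ) (hi1 : 1 ≤ i) (hin : i ≤ n),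
        ∃ F : Set ℂ, F.Finite ∧
          ∀ η : ℂ, ‖η‖ = 1 → η ∉ F →
            ∃ h : Polynomial ℂ, h ≠ 0 ∧
              (∀ s : ℝ, 0 < s → s ≤ 1 → Polynomial.eval ((s : ℂ)) h ≠ 0) ∧
              Module.Flat (Localization (Submonoid.powers h))
                (LocalizedModule (Submonoid.powers h)
                  (MvPolynomial (HVar n i) ℂ ⧸
                    Ideal.span (Set.range (HPolys f i hin y η)))) := by
  classical
  refine ⟨Set.univ, ⟨{1}, by ext x; simp [zlocus]⟩, ⟨0, trivial⟩, ?_⟩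
  intro y _ i hi1 hin
  set A := MvPolynomial (HVar n i) ℂ with hA
  set XA : A := MvPolynomial.X (Sum.inr ()) with hXA
  set I1 : Ideal A := Ideal.span (Set.range (HPolys f i hin y 1)) with hI1
  -- the torsion ideal over the `t`-line at `η = 1`
  set T1 : Ideal A :=
    { carrier := {a | ∃ p : Polynomial ℂ, p ≠ 0 ∧ (Polynomial.aeval XA p) * a ∈ I1}
      add_mem' := by
        rintro a b ⟨p, hp, hpa⟩ ⟨p', hp', hpb⟩
        refine ⟨p * p', mul_ne_zero hp hp', ?_⟩
        have : (Polynomial.aeval XA (p * p')) * (a + b) =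
            Polynomial.aeval XA p' * (Polynomial.aeval XA p * a) +
            Polynomial.aeval XA p * (Polynomial.aeval XA p' * b) := by
          rw [map_mul]; ring
        rw [this]
        exact Ideal.add_mem _ (Ideal.mul_mem_left _ _ hpa) (Ideal.mul_mem_left _ _ hpb)
      zero_mem' := ⟨1, one_ne_zero, by simp⟩
      smul_mem' := by
        rintro c a ⟨p, hp, hpa⟩
        refine ⟨p, hp, ?_⟩
        have : (Polynomial.aeval XA p) * (c • a) = c * (Polynomial.aeval XA p * a) := by
          rw [smul_eq_mul]; ring
        rw [this]
        exact Ideal.mul_mem_left _ _ hpa } with hT1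
  have hT1mem : ∀ a : A, a ∈ T1 ↔
      ∃ p : Polynomial ℂ, p ≠ 0 ∧ (Polynomial.aeval XA p) * a ∈ I1 := fun a => Iff.rfl
  -- A is noetherian, so T1 is finitely generated; build the killing polynomial g
  obtain ⟨s, hs⟩ : T1.FG := IsNoetherian.noetherian T1
  have hsub : ∀ b ∈ s, (b : A) ∈ T1 := by
    intro b hb; rw [← hs]; exact Ideal.subset_span hb
  choose P hP0 hPI using fun b : {x // x ∈ s} => (hT1mem b).mp (hsub b b.2)
  set g : Polynomial ℂ := ∏ b ∈ s.attach, P b with hg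
  have hg0 : g ≠ 0 := Finset.prod_ne_zero_iff.mpr fun b _ => hP0 b
  have hkill1 : ∀ a ∈ T1, (Polynomial.aeval XA g) * a ∈ I1 := by
    have hle : T1 ≤ Submodule.comap (LinearMap.mulLeft A (Polynomial.aeval XA g)) I1 := by
      rw [← hs]
      rw [Ideal.span_le]
      intro b hb
      simp only [SetLike.mem_coe, Submodule.mem_comap, LinearMap.mulLeft_apply]
      have hsplit : g = P ⟨b, hb⟩ * ∏ c ∈ s.attach.erase ⟨b, hb⟩, P c :=
        (Finset.mul_prod_erase s.attach P (Finset.mem_attach s ⟨b, hb⟩)).symm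
      have hbI : (Polynomial.aeval XA) (P ⟨b, hb⟩) * b ∈ I1 := hPI ⟨b, hb⟩
      have heq : (Polynomial.aeval XA) g * b =
          (Polynomial.aeval XA) (∏ c ∈ s.attach.erase ⟨b, hb⟩, P c) *
            ((Polynomial.aeval XA) (P ⟨b, hb⟩) * b) := by
        rw [hsplit, map_mul]; ring
      rw [heq]
      exact Ideal.mul_mem_left _ _ hbI
    intro a ha
    exact hle ha
  -- the finite bad set of unit directions
  refine ⟨(fun r : ℂ => r / (‖r‖ : ℂ)) '' {x | g.IsRoot x},
    Set.Finite.image _ (Polynomial.finite_setOf_isRoot hg0), ?_⟩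
  intro η hη hηF
  have hη0 : η ≠ 0 := by
    intro h; rw [h] at hη; simp at hη
  set q : Polynomial ℂ := g.comp (Polynomial.C η * Polynomial.X) with hq
  have hqeval : ∀ w : ℂ, q.eval w = g.eval (η * w) := by
    intro w; simp [hq, Polynomial.eval_comp]
  have hq0 : q ≠ 0 := by
    intro h
    apply hg0
    apply Polynomial.zero_of_eval_zero
    intro x
    have := hqeval (η⁻¹ * x)
    rw [h] at this
    simpa [← mul_assoc, mul_inv_cancel₀ hη0] using this.symm
  have hqpos : ∀ s : ℝ, 0 < s → s ≤ 1 → Polynomial.eval ((s : ℂ)) q ≠ 0 := by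
    intro σ hσ0 hσ1 hz
    apply hηF
    refine ⟨η * σ, by rw [Set.mem_setOf_eq, Polynomial.IsRoot, ← hqeval]; exact hz, ?_⟩
    have habs : ‖η * σ‖ = σ := by
      rw [norm_mul, hη, one_mul, Complex.norm_real, Real.norm_eq_abs, abs_of_pos hσ0]
    show (η * (σ:ℂ)) / ((‖η * (σ:ℂ)‖ : ℝ) : ℂ) = η
    rw [habs, mul_div_assoc, div_self (by exact_mod_cast ne_of_gt hσ0), mul_one]
  refine ⟨q, hq0, hqpos, ?_⟩
  -- now prove flatness of the localized module
  set Iη : Ideal A := Ideal.span (Set.range (HPolys f i hin y η)) with hIη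
  set M := A ⧸ Iη with hM
  -- ideal transport along the twist
  have hmapinv : Ideal.map (twist n i η⁻¹) Iη ≤ I1 := by
    rw [hIη, Ideal.map_span, Ideal.span_le]
    rintro _ ⟨_, ⟨r, rfl⟩, rfl⟩
    have : twist n i η⁻¹ (HPolys f i hin y η r) = HPolys f i hin y 1 r := by
      have h2 : HPolys f i hin y η r = twist n i η (HPolys f i hin y 1 r) := by
        rw [twist_HPolys, mul_one]
      rw [h2, twist_inv_twist n i η hη0]
    rw [this]
    exact Ideal.subset_span ⟨r, rfl⟩
  have hmapfwd : Ideal.map (twist n i η) I1 ≤ Iη := by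
    rw [hI1, Ideal.map_span, Ideal.span_le]
    rintro _ ⟨_, ⟨r, rfl⟩, rfl⟩
    rw [twist_HPolys, mul_one]
    exact Ideal.subset_span ⟨r, rfl⟩
  -- the key torsion-killing property at η
  have hkillη : ∀ (a : A) (p : Polynomial ℂ), p ≠ 0 →
      (Polynomial.aeval XA p) * a ∈ Iη → (Polynomial.aeval XA q) * a ∈ Iη := by
    intro a p hp hpa
    set a' : A := twist n i η⁻¹ a with ha'
    set p' : Polynomial ℂ := p.comp (Polynomial.C η⁻¹ * Polynomial.X) with hp'def
    have hp'0 : p' ≠ 0 := by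
      intro h
      apply hp
      apply Polynomial.zero_of_eval_zero
      intro x
      have : p'.eval (η * x) = 0 := by rw [h]; simp
      rw [hp'def] at this
      simpa [Polynomial.eval_comp, ← mul_assoc, inv_mul_cancel₀ hη0] using this
    have h1 : (Polynomial.aeval XA p') * a' ∈ I1 := by
      have := hmapinv (Ideal.mem_map_of_mem (twist n i η⁻¹) hpa)
      rwa [map_mul, twist_aeval] at this
    have h2 : a' ∈ T1 := ⟨p', hp'0, h1⟩
    have h3 := hkill1 a' h2
    have h4 := hmapfwd (Ideal.mem_map_of_mem (twist n i η) h3)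
    rwa [map_mul, twist_aeval, ← hq, ha', twist_twist, mul_inv_cancel₀ hη0, twist_one] at h4
  -- scalar action of ℂ[t] on the quotient
  have hsmul : ∀ (p : Polynomial ℂ) (a : A),
      p • (Ideal.Quotient.mk Iη a) = Ideal.Quotient.mk Iη ((Polynomial.aeval XA p) * a) := by
    intro p a
    rw [show p • Ideal.Quotient.mk Iη a = Ideal.Quotient.mk Iη (p • a) from rfl,
      Algebra.smul_def]
    rfl
  -- instances on the localization
  have hple : Submonoid.powers q ≤ nonZeroDivisors (Polynomial ℂ) := by
    intro x hx
    obtain ⟨e, rfl⟩ := hx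
    exact mem_nonZeroDivisors_of_ne_zero (pow_ne_zero e hq0)
  haveI : IsDomain (Localization (Submonoid.powers q)) :=
    IsLocalization.isDomain_localization hple
  haveI : IsPrincipalIdealRing (Localization (Submonoid.powers q)) :=
    aux_loc_pid _ _
  apply aux_flat_of_tf
  intro c x hcx
  by_cases hc : c = 0
  · exact Or.inl hc
  right
  induction x using LocalizedModule.induction_on with
  | _ m t =>
    induction c using Localization.induction_on with
    | _ rs =>
      obtain ⟨r, u⟩ := rs
      have hr0 : r ≠ 0 := by
        rintro rfl
        exact hc (Localization.mk_zero u)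
      rw [LocalizedModule.mk_smul_mk] at hcx
      have h0 : (LocalizedModule.mk (r • m) (u * t) :
          LocalizedModule (Submonoid.powers q) M) = LocalizedModule.mk 0 (u * t) := by
        rw [hcx, LocalizedModule.zero_mk]
      rw [LocalizedModule.mk_eq] at h0
      obtain ⟨v, hv⟩ := h0
      simp only [smul_zero] at hv
      -- so (v * (u*t) * r) • m = 0 with nonzero polynomial coefficient
      obtain ⟨a, rfl⟩ := Ideal.Quotient.mk_surjective m
      have hv' : ((v : Polynomial ℂ) * ((u * t : Submonoid.powers q) : Polynomial ℂ) * r) •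
          (Ideal.Quotient.mk Iη a) = 0 := by
        rw [mul_smul, mul_smul]
        rw [← Submonoid.smul_def, ← Submonoid.smul_def]
        exact hv
      have hcoef0 : (v : Polynomial ℂ) * ((u * t : Submonoid.powers q) : Polynomial ℂ) * r ≠ 0 := by
        apply mul_ne_zero _ hr0
        apply mul_ne_zero
        · obtain ⟨e, he⟩ := v.2; rw [← he]; exact pow_ne_zero e hq0
        · obtain ⟨e, he⟩ := (u * t).2; rw [← he]; exact pow_ne_zero e hq0
      rw [hsmul] at hv'
      have hmem : (Polynomial.aeval XA
          ((v : Polynomial ℂ) * ((u * t : Submonoid.powers q) : Polynomial ℂ) * r)) * a ∈ Iη :=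
        (Ideal.Quotient.eq_zero_iff_mem).mp hv'
      have hqa : (Polynomial.aeval XA q) * a ∈ Iη := hkillη a _ hcoef0 hmem
      have hqm : q • (Ideal.Quotient.mk Iη a) = 0 := by
        rw [hsmul]
        exact (Ideal.Quotient.eq_zero_iff_mem).mpr hqa
      -- conclude mk m t = 0
      rw [show (0 : LocalizedModule (Submonoid.powers q) M) =
        LocalizedModule.mk 0 t from (LocalizedModule.zero_mk t).symm]
      rw [LocalizedModule.mk_eq]
      refine ⟨⟨q, Submonoid.mem_powers q⟩, ?_⟩
      simp only [smul_zero]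
      rw [Submonoid.smul_def, Submonoid.smul_def]
      rw [smul_comm]
      rw [hqm, smul_zero]
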